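/- arXiv:1404.6962 — 4 statements merged into one kernel-verified Lean document; each statement's English description precedes it below -/
import Mathlib

section
/- Let n and ℓ be positive integers with ℓ ≤ n, let (E, ≤) be a totally ordered finite set of cardinality n, let f : E → ℝ≥0, and let s = Σ_{x ∈ E} f(x). Then Σ_{x_1 < x_2 < … < x_ℓ} f(x_1) f(x_2) ⋯ f(x_ℓ) ≤ C(n, ℓ) (s/n)^ℓ, where the sum ranges over all strictly increasing ℓ-tuples of elements of E and C(n, ℓ) is the binomial coefficient; equivalently, the sum over all ℓ-element subsets of E of the product of the values of f on the subset is at most C(n, ℓ) (s/n)^ℓ. -/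
/-!
Induct on the multiset of values, adding one value `a` at a time:
`e_{j+1}(a ::ₘ s) = e_{j+1}(s) + a e_j(s)`. Bounding both terms by the induction hypothesis at
the mean `u` of `s` and using the absorption identities for binomial coefficients, the claim for
`a ::ₘ s` reduces to `u ^ j ((j + 1) A - j u) ≤ A ^ (j + 1)` for the new mean `A`: the tangent of
`x ↦ x ^ (j + 1)` at `u` lies below its graph, which is Bernoulli's inequality.
-/

section Maclaurin

variable {R : Type*} [Field R] [LinearOrder R] [IsStrictOrderedRing R]

theorem pow_mul_tangent_le_pow {u A : R} (hu : 0 ≤ u) (hA : 0 ≤ u + A) (j : ℕ) :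
    u ^ j * ((j + 1) * A - j * u) ≤ A ^ (j + 1) := by
  have h := pow_add_mul_le_add_pow hu (b := A - u) (by linarith) (j + 1)
  rw [add_sub_cancel, Nat.add_sub_cancel, pow_succ] at h
  push_cast at h
  linarith

theorem choose_mul_pow_add_mul_choose_mul_pow_le {m u : R} (hm : 0 ≤ m) (hu : 0 ≤ u) (k j : ℕ) :
    (k.choose (j + 1) : R) * u ^ (j + 1) + m * ((k.choose j : R) * u ^ j)
      ≤ ((k + 1).choose (j + 1) : R) * ((m + k * u) / (k + 1)) ^ (j + 1) := by
  rcases lt_or_ge k j with hkj | hjk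
  · simp [Nat.choose_eq_zero_of_lt hkj, Nat.choose_eq_zero_of_lt (hkj.trans j.lt_succ_self)]
    positivity
  set A := (m + k * u) / (k + 1) with hA
  have hmA : m = (k + 1) * A - k * u := by rw [hA]; field_simp; ring
  have hpascal : (k.choose (j + 1) : R) * (j + 1) = k.choose j * (k - j) := by
    have h := congrArg (Nat.cast (R := R)) (Nat.choose_succ_right_eq k j)
    push_cast [Nat.cast_sub hjk] at h
    exact h
  have habsorb : ((k + 1).choose (j + 1) : R) * (j + 1) = (k + 1) * k.choose j := by
    exact_mod_cast (Nat.add_one_mul_choose_eq k j).symm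
  have htangent := pow_mul_tangent_le_pow hu (A := A) (by rw [hA]; positivity) j
  refine le_of_mul_le_mul_right ?_ (by positivity : (0 : R) < j + 1)
  calc _ = (k + 1) * k.choose j * (u ^ j * ((j + 1) * A - j * u)) := by
        linear_combination u ^ (j + 1) * hpascal + (j + 1) * k.choose j * u ^ j * hmA
    _ ≤ (k + 1) * k.choose j * A ^ (j + 1) := by gcongr
    _ = _ := by linear_combination -A ^ (j + 1) * habsorb

end Maclaurin

namespace Multiset

theorem esymm_cons_succ {R : Type*} [CommSemiring R] (a : R) (s : Multiset R) (k : ℕ) :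
    (a ::ₘ s).esymm (k + 1) = s.esymm (k + 1) + a * s.esymm k := by
  simp [esymm, powersetCard_cons, map_map, sum_map_mul_left]

theorem esymm_le_choose_mul_mean_pow {R : Type*} [Field R] [LinearOrder R]
    [IsStrictOrderedRing R] (s : Multiset R) (hs : ∀ x ∈ s, 0 ≤ x) (ℓ : ℕ) :
    s.esymm ℓ ≤ (card s).choose ℓ * (s.sum / card s) ^ ℓ := by
  induction s using Multiset.induction_on generalizing ℓ with
  | empty => cases ℓ <;> simp [esymm, powersetCard_zero_right]
  | cons a s ih =>
    rcases ℓ with _ | j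
    · simp [esymm, powersetCard_zero_left]
    have ha : 0 ≤ a := hs a (mem_cons_self a s)
    have hs' : ∀ x ∈ s, 0 ≤ x := fun x hx => hs x (mem_cons_of_mem hx)
    have hmean : 0 ≤ s.sum / card s := div_nonneg (sum_nonneg hs') (Nat.cast_nonneg _)
    have hsum : (card s : R) * (s.sum / card s) = s.sum :=
      mul_div_cancel_of_imp' fun h => by simp_all
    calc (a ::ₘ s).esymm (j + 1) = s.esymm (j + 1) + a * s.esymm j := esymm_cons_succ a s j
      _ ≤ (card s).choose (j + 1) * (s.sum / card s) ^ (j + 1)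
          + a * ((card s).choose j * (s.sum / card s) ^ j) := by
        gcongr
        exacts [ih hs' _, ih hs' _]
      _ ≤ (card s + 1).choose (j + 1)
          * ((a + card s * (s.sum / card s)) / (card s + 1)) ^ (j + 1) :=
        choose_mul_pow_add_mul_choose_mul_pow_le ha hmean (card s) j
      _ = _ := by rw [hsum, card_cons, sum_cons, Nat.cast_succ]

end Multiset

theorem sum_products_le_binomial_general (n ℓ : ℕ)
    (E : Type) [Fintype E] (hE : Fintype.card E = n)
    (f : E → ℝ) (hf : ∀ x, 0 ≤ f x) :
    ∑ S ∈ Finset.powersetCard ℓ (Finset.univ : Finset E), ∏ x ∈ S, f x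
      ≤ (n.choose ℓ : ℝ) * ((∑ x, f x) / n) ^ ℓ := by
  have h := (Finset.univ.val.map f).esymm_le_choose_mul_mean_pow (by simpa using hf) ℓ
  rwa [Finset.esymm_map_val, Multiset.card_map, Finset.card_val, Finset.card_univ, hE] at h

/-- If `f : E → ℝ≥0` on a totally ordered finite set `E` with `|E| = n` sums up to `s`,
then the sum over all strictly increasing `ℓ`-tuples (equivalently, over all `ℓ`-element
subsets) of the products of the values of `f` is at most `C(n,ℓ) (s/n)^ℓ`. -/
theorem sum_products_le_binomial (n ℓ : ℕ) (hℓ : 0 < ℓ) (hn : ℓ ≤ n)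
    (E : Type) [Fintype E] [LinearOrder E] (hE : Fintype.card E = n)
    (f : E → ℝ) (hf : ∀ x, 0 ≤ f x) :
    ∑ S ∈ Finset.powersetCard ℓ (Finset.univ : Finset E), ∏ x ∈ S, f x
      ≤ (n.choose ℓ : ℝ) * ((∑ x, f x) / n) ^ ℓ :=
  sum_products_le_binomial_general n ℓ E hE f hf
end

section
/- Fix a real number ε > 0. There exists N such that for every n ≥ N and every probability mass function p on [n], a random p-mapping of size n has more than n^{1/2+ε} cyclic points or height greater than n^{1/2+ε} with probability at most exp(−n^ε). -/
/-!
A union bound reduces both events to elementary symmetric sums `e_k(p)`. If `f` has at least `k`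
cyclic points, it permutes some set `S` with `#S = j ≥ k`, which happens with probability at most
`j! ∏_{i ∈ S} p i`. If `f` has height at least `k`, then `x, f x, …, f^[k] x` are distinct for some
`x`, which happens with probability at most `n · k! e_k(p)`. By AM-GM,
`k^k e_k(p) ≤ ∏ (1 + k p_i) ≤ (1 + k/n)^n ≤ exp (k - k²/4n)`, and with Stirling's bound
`k! ≤ e √k (k/e)^k` this gives `k! e_k(p) ≤ e √n exp (-k²/4n)`, which is smaller than
`exp (-n^ε) / (2 n)` as soon as `k > n^(1/2+ε)` and `n` is large.
-/

open Classical

/-- A point `x` is cyclic for `f` if some positive iterate of `f` sends `x` to itself. -/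
def IsCyclicPt {n : ℕ} (f : Fin n → Fin n) (x : Fin n) : Prop :=
  ∃ i > 0, f^[i] x = x

/-- The set of cyclic points of a mapping `f` on `[n]`. -/
noncomputable def cyclicPts {n : ℕ} (f : Fin n → Fin n) : Finset (Fin n) :=
  Finset.univ.filter (IsCyclicPt f)

/-- The height of a point `x`: the least `i ≥ 0` such that `f^[i] x` is cyclic. -/
noncomputable def heightOf {n : ℕ} (f : Fin n → Fin n) (x : Fin n) : ℕ :=
  sInf {i : ℕ | IsCyclicPt f (f^[i] x)}

/-- The height of a mapping: the maximal height of a point. -/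
noncomputable def height {n : ℕ} (f : Fin n → Fin n) : ℕ :=
  Finset.univ.sup (heightOf f)

open Finset Real Filter
open scoped Nat

theorem one_add_le_exp_sub_sq_div_four {x : ℝ} (hx0 : 0 ≤ x) (hx1 : x ≤ 1) :
    1 + x ≤ exp (x - x ^ 2 / 4) := by
  have h := quadratic_le_exp_of_nonneg (x := x - x ^ 2 / 4) (by nlinarith)
  nlinarith [pow_le_pow_of_le_one hx0 hx1 (show 2 ≤ 3 by norm_num), sq_nonneg (x ^ 2)]

theorem prod_le_mean_pow {ι : Type*} (s : Finset ι) {z : ι → ℝ} (hz : ∀ i ∈ s, 0 ≤ z i) :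
    ∏ i ∈ s, z i ≤ ((∑ i ∈ s, z i) / #s) ^ #s := by
  rcases s.eq_empty_or_nonempty with rfl | hs
  · simp
  have hcard : (0 : ℝ) < #s := by exact_mod_cast hs.card_pos
  have amgm := geom_mean_le_arith_mean_weighted s (fun _ => (#s : ℝ)⁻¹) z
    (fun _ _ => by positivity) (by simp [hcard.ne']) hz
  rw [finsetProd_rpow s z hz, ← mul_sum, inv_mul_eq_div] at amgm
  calc ∏ i ∈ s, z i = ((∏ i ∈ s, z i) ^ (#s : ℝ)⁻¹) ^ #s :=
        (rpow_inv_natCast_pow (prod_nonneg hz) hs.card_pos.ne').symm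
    _ ≤ _ := pow_le_pow_left₀ (rpow_nonneg (prod_nonneg hz) _) amgm _

theorem factorial_le_exp_one_mul_sqrt_mul {k : ℕ} (hk : 0 < k) :
    (k ! : ℝ) ≤ exp 1 * √k * (k / exp 1) ^ k := by
  have h : Stirling.stirlingSeq k ≤ Stirling.stirlingSeq 1 := by
    simpa [Nat.sub_add_cancel hk] using Stirling.stirlingSeq'_antitone (Nat.zero_le (k - 1))
  rw [Stirling.stirlingSeq_one, Stirling.stirlingSeq,
    div_le_div_iff₀ (by positivity) (by positivity), sqrt_mul (by norm_num)] at h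
  nlinarith [sqrt_pos.2 (show (0 : ℝ) < 2 by norm_num), exp_pos 1]

theorem two_mul_mul_sqrt_mul_exp_le {ε x : ℝ} (hε : 0 < ε) (hx : 1 ≤ x)
    (hy : 8 + 6 / ε ≤ x ^ ε) :
    2 * (x * (exp 1 * √x * exp (-((x ^ ε) ^ 2 / 4)))) ≤ exp (-x ^ ε) := by
  have hx0 : 0 < x := by linarith
  set y := x ^ ε
  have hlogx : 3 / 2 * log x ≤ 6 / ε / 4 * y := by
    have hlog : ε * log x ≤ y := by
      rw [← log_rpow hx0]
      linarith [log_le_sub_one_of_pos (rpow_pos_of_pos hx0 ε)]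
    calc 3 / 2 * log x = 3 / (2 * ε) * (ε * log x) := by field_simp
      _ ≤ 3 / (2 * ε) * y := by gcongr
      _ = 6 / ε / 4 * y := by ring
  have hlog2 : log 2 < 1 := by
    linarith [log_lt_sub_one_of_pos (show (0 : ℝ) < 2 by norm_num) (by norm_num)]
  have hexp : 2 * (x * (exp 1 * √x * exp (-(y ^ 2 / 4))))
      = exp (log 2 + log x + 1 + log x / 2 - y ^ 2 / 4) := by
    rw [← log_sqrt hx0.le, sub_eq_add_neg, exp_add, exp_add, exp_add, exp_add,
      exp_log (by norm_num), exp_log hx0, exp_log (sqrt_pos.2 hx0)]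
    ring
  rw [hexp, exp_le_exp]
  have hc : 0 ≤ 6 / ε := by positivity
  nlinarith [mul_le_mul_of_nonneg_right hy (by linarith : (0 : ℝ) ≤ y)]

theorem esymm_map_nonneg {ι : Type*} (s : Finset ι) {p : ι → ℝ} (hp : ∀ i ∈ s, 0 ≤ p i)
    (k : ℕ) : 0 ≤ (s.val.map p).esymm k := by
  rw [Finset.esymm_map_val]
  exact sum_nonneg fun T hT => prod_nonneg fun i hi => hp i ((mem_powersetCard.1 hT).1 hi)

theorem pow_mul_esymm_le_prod_one_add {ι : Type*} (s : Finset ι) {p : ι → ℝ}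
    (hp : ∀ i ∈ s, 0 ≤ p i) {t : ℝ} (ht : 0 ≤ t) (k : ℕ) :
    t ^ k * (s.val.map p).esymm k ≤ ∏ i ∈ s, (1 + t * p i) := by
  rw [Finset.esymm_map_val, prod_one_add, mul_sum]
  calc ∑ T ∈ s.powersetCard k, t ^ k * T.prod p
        = ∑ T ∈ s.powersetCard k, ∏ i ∈ T, t * p i := by
        refine sum_congr rfl fun T hT => ?_
        rw [prod_mul_distrib, prod_const, (mem_powersetCard.1 hT).2]
    _ ≤ ∑ T ∈ s.powerset, ∏ i ∈ T, t * p i :=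
        sum_le_sum_of_subset_of_nonneg (fun T hT => mem_powerset.2 (mem_powersetCard.1 hT).1)
          fun T hT _ => prod_nonneg fun i hi => mul_nonneg ht (hp i (mem_powerset.1 hT hi))

theorem prod_one_add_mul_le_exp {ι : Type*} [Fintype ι] {p : ι → ℝ} (hp0 : ∀ i, 0 ≤ p i)
    (hp1 : ∑ i, p i = 1) {t : ℝ} (ht0 : 0 ≤ t) (ht : t ≤ Fintype.card ι) :
    ∏ i, (1 + t * p i) ≤ exp (t - t ^ 2 / (4 * Fintype.card ι)) := by
  have : Nonempty ι := univ_nonempty_iff.1 (nonempty_of_sum_ne_zero (hp1 ▸ one_ne_zero))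
  have hn : (0 : ℝ) < Fintype.card ι := by exact_mod_cast Fintype.card_pos
  have hmean : (∑ i, (1 + t * p i)) / Fintype.card ι = 1 + t / Fintype.card ι := by
    rw [sum_add_distrib, ← mul_sum, hp1, sum_const, card_univ, nsmul_eq_mul]
    field_simp
  calc ∏ i, (1 + t * p i) ≤ (1 + t / Fintype.card ι) ^ Fintype.card ι := by
        simpa only [card_univ, hmean] using
          prod_le_mean_pow univ fun i _ => add_nonneg zero_le_one (mul_nonneg ht0 (hp0 i))
    _ ≤ exp (t / Fintype.card ι - (t / Fintype.card ι) ^ 2 / 4) ^ Fintype.card ι :=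
        pow_le_pow_left₀ (add_nonneg zero_le_one (div_nonneg ht0 hn.le))
          (one_add_le_exp_sub_sq_div_four (div_nonneg ht0 hn.le) ((div_le_one hn).2 ht)) _
    _ = exp (t - t ^ 2 / (4 * Fintype.card ι)) := by
        rw [← exp_nat_mul]
        congr 1
        field_simp

theorem factorial_mul_esymm_le {ι : Type*} [Fintype ι] {p : ι → ℝ} (hp0 : ∀ i, 0 ≤ p i)
    (hp1 : ∑ i, p i = 1) {k : ℕ} (hk : 0 < k) :
    k ! * (univ.val.map p).esymm k ≤
      exp 1 * √(Fintype.card ι) * exp (-(k ^ 2 / (4 * Fintype.card ι))) := by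
  rcases lt_or_ge (Fintype.card ι) k with hlt | hle
  · rw [Finset.esymm_map_val, powersetCard_eq_empty.2 (by simpa using hlt)]
    simp only [sum_empty, mul_zero]
    positivity
  set E := (univ.val.map p).esymm k
  have hk0 : (0 : ℝ) < k := by exact_mod_cast hk
  have hE : (k : ℝ) ^ k * E ≤ exp (k - k ^ 2 / (4 * Fintype.card ι)) :=
    (pow_mul_esymm_le_prod_one_add univ (fun i _ => hp0 i) hk0.le k).trans
      (prod_one_add_mul_le_exp hp0 hp1 hk0.le (by exact_mod_cast hle))
  calc (k ! : ℝ) * E = k ! * ((k : ℝ) ^ k * E) / (k : ℝ) ^ k := by field_simp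
    _ ≤ exp 1 * √k * (k / exp 1) ^ k * exp (k - k ^ 2 / (4 * Fintype.card ι)) / (k : ℝ) ^ k := by
        gcongr
        · exact mul_nonneg (by positivity) (esymm_map_nonneg _ (fun i _ => hp0 i) k)
        · exact factorial_le_exp_one_mul_sqrt_mul hk
    _ = exp 1 * √k * exp (-(k ^ 2 / (4 * Fintype.card ι))) := by
        rw [div_pow, exp_sub, exp_neg, ← exp_one_pow]
        field_simp
    _ ≤ exp 1 * √(Fintype.card ι) * exp (-(k ^ 2 / (4 * Fintype.card ι))) := by
        gcongr

theorem factorial_mul_esymm_le_of_rpow_le {ι : Type*} [Fintype ι] {p : ι → ℝ}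
    (hp0 : ∀ i, 0 ≤ p i) (hp1 : ∑ i, p i = 1) {ε : ℝ} {k : ℕ}
    (hk : (Fintype.card ι : ℝ) ^ ((1 : ℝ) / 2 + ε) ≤ k) :
    k ! * (univ.val.map p).esymm k ≤
      exp 1 * √(Fintype.card ι) * exp (-(((Fintype.card ι : ℝ) ^ ε) ^ 2 / 4)) := by
  have : Nonempty ι := univ_nonempty_iff.1 (nonempty_of_sum_ne_zero (hp1 ▸ one_ne_zero))
  have hn : (0 : ℝ) < Fintype.card ι := by exact_mod_cast Fintype.card_pos
  have hm : ((Fintype.card ι : ℝ) ^ ((1 : ℝ) / 2 + ε)) ^ 2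
      = Fintype.card ι * ((Fintype.card ι : ℝ) ^ ε) ^ 2 := by
    rw [rpow_add hn, ← sqrt_eq_rpow, mul_pow, sq_sqrt hn.le]
  have hk0 : 0 < k := by exact_mod_cast (rpow_pos_of_pos hn _).trans_le hk
  refine (factorial_mul_esymm_le hp0 hp1 hk0).trans
    (mul_le_mul_of_nonneg_left (exp_le_exp.2 ?_) (by positivity))
  rw [neg_le_neg_iff, le_div_iff₀ (by positivity)]
  nlinarith [rpow_nonneg hn.le ((1 : ℝ) / 2 + ε)]

theorem card_embedding_map_eq_le {ι : Type*} [Fintype ι] {k : ℕ}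
    {T : Finset ι} (hT : #T = k) : #{b : Fin k ↪ ι | univ.map b = T} ≤ k ! := by
  let toι : (Fin k ↪ T) → (Fin k ↪ ι) := fun e => e.trans (Function.Embedding.subtype _)
  calc #{b : Fin k ↪ ι | univ.map b = T} ≤ #(univ.image toι) := by
        refine card_le_card fun b hb => mem_image.2 ?_
        have hbT : ∀ i, b i ∈ T := fun i => by
          rw [← (mem_filter.1 hb).2]
          exact mem_map_of_mem b (mem_univ i)
        exact ⟨⟨fun i => ⟨b i, hbT i⟩, fun i j h => b.injective (congrArg Subtype.val h)⟩,
          mem_univ _, rfl⟩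
    _ ≤ k ! :=
        card_image_le.trans (by simp [Fintype.card_embedding_eq, hT, Nat.descFactorial_self])

theorem sum_embedding_prod_le_factorial_mul_esymm {ι : Type*} [Fintype ι]
    {p : ι → ℝ} (hp0 : ∀ i, 0 ≤ p i) (k : ℕ) :
    ∑ b : Fin k ↪ ι, ∏ i, p (b i) ≤ k ! * (univ.val.map p).esymm k := by
  have hmaps : ∀ b ∈ (univ : Finset (Fin k ↪ ι)), univ.map b ∈ powersetCard k univ := by
    simp
  rw [Finset.esymm_map_val, mul_sum, ← sum_fiberwise_of_maps_to hmaps]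
  refine sum_le_sum fun T hT => ?_
  calc ∑ b ∈ {b : Fin k ↪ ι | univ.map b = T}, ∏ i, p (b i)
        = #{b : Fin k ↪ ι | univ.map b = T} * ∏ j ∈ T, p j := by
        rw [← nsmul_eq_mul, ← sum_const]
        exact sum_congr rfl fun b hb => by rw [← (mem_filter.1 hb).2, prod_map]
    _ ≤ k ! * ∏ j ∈ T, p j := by
        gcongr
        · exact prod_nonneg fun j _ => hp0 j
        · exact_mod_cast card_embedding_map_eq_le (mem_powersetCard.1 hT).2

theorem sum_embedding_comp_succ_le {ι : Type*} [Fintype ι] {k : ℕ} {g : (Fin k → ι) → ℝ}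
    (hg : ∀ b, 0 ≤ g b) :
    ∑ a : Fin (k + 1) ↪ ι, g (a ∘ Fin.succ) ≤ Fintype.card ι * ∑ b : Fin k ↪ ι, g b := by
  calc ∑ a : Fin (k + 1) ↪ ι, g (a ∘ Fin.succ)
        = ∑ s : Σ b : Fin k ↪ ι, {i // i ∉ Set.range b}, g s.1 :=
        Fintype.sum_equiv (Equiv.embeddingFinSucc k ι) _ _ fun _ => rfl
    _ = ∑ b : Fin k ↪ ι, Fintype.card {i // i ∉ Set.range b} * g b := by
        rw [Fintype.sum_sigma]
        simp only [sum_const, card_univ, nsmul_eq_mul]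
    _ ≤ ∑ b : Fin k ↪ ι, Fintype.card ι * g b := by
        gcongr with b
        · exact hg b
        · exact_mod_cast Fintype.card_subtype_le _
    _ = Fintype.card ι * ∑ b : Fin k ↪ ι, g b := (mul_sum _ _ _).symm

theorem bijOn_cyclicPts {n : ℕ} (f : Fin n → Fin n) :
    Set.BijOn f (cyclicPts f : Set (Fin n)) (cyclicPts f) := by
  have hcyc : (cyclicPts f : Set (Fin n)) = Function.periodicPts f := by
    ext x
    simp only [cyclicPts, coe_filter, mem_univ, true_and, Set.mem_ofPred_eq]
    rfl
  exact hcyc ▸ Function.bijOn_periodicPts f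

theorem injective_iterate_of_le_heightOf {n : ℕ} {f : Fin n → Fin n} {x : Fin n} {k : ℕ}
    (hk : k ≤ heightOf f x) : Function.Injective fun i : Fin (k + 1) => f^[i] x := by
  have not_cyclic : ∀ i < k, ¬IsCyclicPt f (f^[i] x) := fun i hi hc =>
    (Nat.sInf_le hc).not_gt (hi.trans_le hk)
  suffices ∀ i j : Fin (k + 1), i < j → f^[i] x ≠ f^[j] x by
    intro i j hij
    by_contra hne
    rcases lt_or_gt_of_ne hne with h | h
    exacts [this i j h hij, this j i h hij.symm]
  intro i j hij heq
  refine not_cyclic i (by omega) ⟨j - i, by omega, ?_⟩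
  rw [← Function.iterate_add_apply, Nat.sub_add_cancel hij.le]
  exact heq.symm

section RandomMapping

variable {n : ℕ}

noncomputable def mappingProb (p : Fin n → ℝ) (P : (Fin n → Fin n) → Prop) : ℝ :=
  ∑ f ∈ univ.filter P, ∏ i, p (f i)

variable {p : Fin n → ℝ}

theorem mappingProb_mono (hp0 : ∀ i, 0 ≤ p i) {P Q : (Fin n → Fin n) → Prop}
    (h : ∀ f, P f → Q f) : mappingProb p P ≤ mappingProb p Q :=
  sum_le_sum_of_subset_of_nonneg (monotone_filter_right _ fun f _ => h f) fun f _ _ =>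
    prod_nonneg fun i _ => hp0 (f i)

theorem mappingProb_or_le (hp0 : ∀ i, 0 ≤ p i) (P Q : (Fin n → Fin n) → Prop) :
    mappingProb p (fun f => P f ∨ Q f) ≤ mappingProb p P + mappingProb p Q := by
  simp only [mappingProb, sum_filter, ← sum_add_distrib]
  refine sum_le_sum fun f _ => ?_
  have hw : 0 ≤ ∏ i, p (f i) := prod_nonneg fun i _ => hp0 (f i)
  split_ifs <;> simp_all

theorem mappingProb_le_sum {ι : Type*} (hp0 : ∀ i, 0 ≤ p i) {P : (Fin n → Fin n) → Prop}
    (s : Finset ι) (Q : ι → (Fin n → Fin n) → Prop) (h : ∀ f, P f → ∃ a ∈ s, Q a f) :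
    mappingProb p P ≤ ∑ a ∈ s, mappingProb p (Q a) := by
  simp only [mappingProb, sum_filter]
  rw [sum_comm]
  refine sum_le_sum fun f _ => ?_
  have hw : 0 ≤ ∏ i, p (f i) := prod_nonneg fun i _ => hp0 (f i)
  have hterm : ∀ a ∈ s, 0 ≤ if Q a f then ∏ i, p (f i) else 0 := fun a _ => by
    split_ifs <;> simp [hw]
  split_ifs with hP
  · obtain ⟨a, ha, hQ⟩ := h f hP
    simpa [hQ] using single_le_sum hterm ha
  · exact sum_nonneg hterm

theorem mappingProb_forall_mem_eq (hp1 : ∑ i, p i = 1) (S : Finset (Fin n))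
    (g : Fin n → Fin n) : mappingProb p (fun f => ∀ j ∈ S, f j = g j) = ∏ j ∈ S, p (g j) := by
  calc mappingProb p (fun f => ∀ j ∈ S, f j = g j)
        = ∑ f ∈ Fintype.piFinset (fun j => if j ∈ S then {g j} else univ), ∏ i, p (f i) := by
        unfold mappingProb
        congr 1
        ext f
        simp only [mem_filter, mem_univ, true_and, Fintype.mem_piFinset]
        refine ⟨fun h j => ?_, fun h j hj => by simpa [hj] using h j⟩
        split_ifs with hj <;> simp [h j, hj]
    _ = ∏ j ∈ S, p (g j) := by
        rw [← prod_univ_sum]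
        simp only [apply_ite (fun t => ∑ j ∈ t, p j), sum_singleton, hp1]
        exact Fintype.prod_ite_mem S _

theorem mappingProb_forall_embedding_eq (hp1 : ∑ i, p i = 1) {ι : Type*} [Fintype ι]
    (c : ι ↪ Fin n) (v : ι → Fin n) :
    mappingProb p (fun f => ∀ i, f (c i) = v i) = ∏ i, p (v i) := by
  have h := mappingProb_forall_mem_eq hp1 (univ.map c) (Function.extend c v id)
  simp only [prod_map, c.injective.extend_apply] at h
  rw [← h, mappingProb, mappingProb]
  congr 1
  ext f
  simp [c.injective.extend_apply]

theorem mappingProb_bijOn_le (hp0 : ∀ i, 0 ≤ p i) (hp1 : ∑ i, p i = 1) (S : Finset (Fin n)) :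
    mappingProb p (fun f => Set.BijOn f S S) ≤ (#S)! * ∏ j ∈ S, p j := by
  calc mappingProb p (fun f => Set.BijOn f S S)
        ≤ ∑ σ : Equiv.Perm S,
            mappingProb p (fun f => ∀ x, f (Function.Embedding.subtype _ x) = σ x) :=
        mappingProb_le_sum hp0 univ _ fun f hf => ⟨hf.equiv f, mem_univ _, fun _ => rfl⟩
    _ = ∑ _σ : Equiv.Perm S, ∏ j ∈ S, p j := by
        refine sum_congr rfl fun σ _ => ?_
        rw [mappingProb_forall_embedding_eq hp1, Equiv.prod_comp σ (fun x => p x), prod_coe_sort]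
    _ = (#S)! * ∏ j ∈ S, p j := by
        simp [Fintype.card_perm]

theorem mappingProb_le_card_cyclicPts_le (hp0 : ∀ i, 0 ≤ p i) (hp1 : ∑ i, p i = 1) (k : ℕ) :
    mappingProb p (fun f => k ≤ #(cyclicPts f))
      ≤ ∑ j ∈ Icc k n, j ! * (univ.val.map p).esymm j := by
  calc mappingProb p (fun f => k ≤ #(cyclicPts f))
        ≤ ∑ j ∈ Icc k n,
            mappingProb p (fun f => ∃ S : Finset (Fin n), #S = j ∧ Set.BijOn f S S) := by
        refine mappingProb_le_sum hp0 (Icc k n)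
          (fun j f => ∃ S : Finset (Fin n), #S = j ∧ Set.BijOn f S S)
          fun f hf => ⟨_, ?_, cyclicPts f, rfl, bijOn_cyclicPts f⟩
        exact mem_Icc.2 ⟨hf, (card_le_univ _).trans_eq (Fintype.card_fin n)⟩
    _ ≤ ∑ j ∈ Icc k n, ∑ S ∈ powersetCard j univ, (#S)! * ∏ j ∈ S, p j :=
        sum_le_sum fun j _ =>
          (mappingProb_le_sum hp0 (powersetCard j univ) (fun S f => Set.BijOn f S S)
            fun _ ⟨S, hS, hf⟩ => ⟨S, mem_powersetCard.2 ⟨subset_univ S, hS⟩, hf⟩).trans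
          (sum_le_sum fun S _ => mappingProb_bijOn_le hp0 hp1 S)
    _ = ∑ j ∈ Icc k n, j ! * (univ.val.map p).esymm j := by
        refine sum_congr rfl fun j _ => ?_
        rw [Finset.esymm_map_val, mul_sum]
        exact sum_congr rfl fun S hS => by rw [(mem_powersetCard.1 hS).2]

theorem mappingProb_le_height_le (hp0 : ∀ i, 0 ≤ p i) (hp1 : ∑ i, p i = 1) {k : ℕ}
    (hk : 0 < k) :
    mappingProb p (fun f => k ≤ height f) ≤ n * (k ! * (univ.val.map p).esymm k) := by
  calc mappingProb p (fun f => k ≤ height f)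
        ≤ ∑ a : Fin (k + 1) ↪ Fin n,
            mappingProb p (fun f => ∀ i, f ((Fin.castSuccEmb.trans a) i) = a i.succ) := by
        refine mappingProb_le_sum hp0 univ _ fun f hf => ?_
        obtain ⟨x, -, hx⟩ := (Finset.le_sup_iff hk).1 hf
        refine ⟨⟨_, injective_iterate_of_le_heightOf hx⟩, mem_univ _, fun i => ?_⟩
        simp [← Function.iterate_succ_apply']
    _ = ∑ a : Fin (k + 1) ↪ Fin n, ∏ i, p ((a ∘ Fin.succ) i) :=
        sum_congr rfl fun a _ =>
          mappingProb_forall_embedding_eq hp1 (Fin.castSuccEmb.trans a) (a ∘ Fin.succ)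
    _ ≤ n * ∑ b : Fin k ↪ Fin n, ∏ i, p (b i) := by
        simpa using sum_embedding_comp_succ_le fun b => prod_nonneg fun i _ => hp0 (b i)
    _ ≤ n * (k ! * (univ.val.map p).esymm k) := by
        gcongr
        exact sum_embedding_prod_le_factorial_mul_esymm hp0 k

theorem mappingProb_cyclicPts_or_height_le (hp0 : ∀ i, 0 ≤ p i) (hp1 : ∑ i, p i = 1)
    {k : ℕ} (hk : 0 < k) {B : ℝ}
    (hB : ∀ j, k ≤ j → (j ! : ℝ) * (univ.val.map p).esymm j ≤ B) :
    mappingProb p (fun f => k ≤ #(cyclicPts f) ∨ k ≤ height f) ≤ 2 * (n * B) := by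
  have hB0 : 0 ≤ B :=
    (mul_nonneg (by positivity) (esymm_map_nonneg _ (fun i _ => hp0 i) k)).trans (hB k le_rfl)
  have hsum : ∑ j ∈ Icc k n, (j ! : ℝ) * (univ.val.map p).esymm j ≤ n * B := by
    refine (sum_le_card_nsmul _ _ _ fun j hj => hB j (mem_Icc.1 hj).1).trans ?_
    rw [nsmul_eq_mul, Nat.card_Icc]
    gcongr
    exact_mod_cast Nat.sub_le_of_le_add (by omega)
  calc _ ≤ mappingProb p (fun f => k ≤ #(cyclicPts f)) + mappingProb p (fun f => k ≤ height f) :=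
        mappingProb_or_le hp0 _ _
    _ ≤ n * B + n * B := by
        gcongr
        · exact (mappingProb_le_card_cyclicPts_le hp0 hp1 k).trans hsum
        · exact (mappingProb_le_height_le hp0 hp1 hk).trans (by gcongr; exact hB k le_rfl)
    _ = 2 * (n * B) := (two_mul _).symm

end RandomMapping

/-- For any `ε > 0`, for `n` large enough and for every probability mass function `p`
on `[n]`, the probability that a random `p`-mapping of size `n` has more than
`n^(1/2+ε)` cyclic points or height greater than `n^(1/2+ε)` is at most `exp(-n^ε)`. -/
theorem p_mapping_cyclic_and_height_bound (ε : ℝ) (hε : 0 < ε) :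
    ∃ N : ℕ, ∀ n ≥ N, ∀ p : Fin n → ℝ, (∀ i, 0 ≤ p i) → (∑ i, p i = 1) →
      ∑ f ∈ (Finset.univ : Finset (Fin n → Fin n)).filter
          (fun f => ((cyclicPts f).card : ℝ) > (n : ℝ) ^ ((1 : ℝ)/2 + ε) ∨
            ((height f : ℝ) > (n : ℝ) ^ ((1 : ℝ)/2 + ε))),
        ∏ i, p (f i)
      ≤ Real.exp (-(n : ℝ) ^ ε) := by
  obtain ⟨N, hN⟩ := eventually_atTop.1 <|
    (((tendsto_rpow_atTop hε).comp tendsto_natCast_atTop_atTop).eventually_ge_atTop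
      (8 + 6 / ε)).and (eventually_ge_atTop 1)
  refine ⟨N, fun n hn p hp0 hp1 => ?_⟩
  obtain ⟨hy, hn1⟩ := hN n hn
  set m : ℝ := (n : ℝ) ^ ((1 : ℝ) / 2 + ε)
  have hm0 : 0 ≤ m := by positivity
  have hB : ∀ j, ⌊m⌋₊ + 1 ≤ j → (j ! : ℝ) * (univ.val.map p).esymm j ≤
      exp 1 * √n * exp (-(((n : ℝ) ^ ε) ^ 2 / 4)) := fun j hj => by
    have hmj : m ≤ j := (Nat.lt_floor_add_one m).le.trans (by exact_mod_cast hj)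
    simpa only [Fintype.card_fin] using
      factorial_mul_esymm_le_of_rpow_le hp0 hp1 (by simpa only [Fintype.card_fin] using hmj)
  calc _ = mappingProb p (fun f => m < #(cyclicPts f) ∨ m < height f) := by
        unfold mappingProb; congr
    _ ≤ mappingProb p (fun f => ⌊m⌋₊ + 1 ≤ #(cyclicPts f) ∨ ⌊m⌋₊ + 1 ≤ height f) :=
        mappingProb_mono hp0 fun f => Or.imp (Nat.floor_lt hm0).2 (Nat.floor_lt hm0).2
    _ ≤ 2 * (n * (exp 1 * √n * exp (-(((n : ℝ) ^ ε) ^ 2 / 4)))) :=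
        mappingProb_cyclicPts_or_height_le hp0 hp1 (Nat.succ_pos _) hB
    _ ≤ exp (-(n : ℝ) ^ ε) := two_mul_mul_sqrt_mul_exp_le hε (by exact_mod_cast hn1) hy
end

section
/- Fix a real number ε > 0. For all n large enough, the probability that a uniform random mapping on [n] has at least n^{1/2+ε} cyclic points is at most (1/2)·exp(−n^ε). -/
open Classical

/-!
A mapping of `[n]` is determined by its set `C` of cyclic points, its restriction to `C` (a
permutation of `C`) and its values off `C`; so at most `(n choose m) m! n^(n-m) = n^(m) n^(n-m)`
mappings have exactly `m` cyclic points, where `n^(m)` is the falling factorial. Since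
`n^(m) ≤ n^m exp(-m(m-1)/2n)`, the probability of at least `k` cyclic points is at most
`n exp(-k(k-1)/2n)`. For `k = ⌈n^(1/2+ε)⌉` the exponent is at least `(n^(2ε) - n^ε)/2`, which
beats `log (2n) + n^ε` as soon as `n^ε ≥ 2/ε + 5`, because `log n ≤ n^ε/ε`.
-/

open Finset Function Real Filter
open scoped Nat

theorem card_filter_mapsTo_injOn_le {α : Type*} [Fintype α] [DecidableEq α] (s : Finset α) :
    #{f : α → α | Set.MapsTo f s s ∧ Set.InjOn f s} ≤
      (#s)! * Fintype.card α ^ (Fintype.card α - #s) := by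
  let restrict : {f : α → α // Set.MapsTo f s s ∧ Set.InjOn f s} → (s ↪ s) × (↥sᶜ → α) :=
    fun f => (⟨fun x => ⟨f.1 x, f.2.1 x.2⟩,
      fun x y h => Subtype.ext (f.2.2 x.2 y.2 (congrArg Subtype.val h))⟩, fun x => f.1 x)
  have restrict_injective : Injective restrict := by
    intro f g h
    ext x : 2
    by_cases hx : x ∈ s
    · exact congrArg Subtype.val (DFunLike.congr_fun (congrArg Prod.fst h) ⟨x, hx⟩)
    · exact congrFun (congrArg Prod.snd h) ⟨x, mem_compl.2 hx⟩
  calc #{f : α → α | Set.MapsTo f s s ∧ Set.InjOn f s}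
      = Fintype.card {f : α → α // Set.MapsTo f s s ∧ Set.InjOn f s} :=
        (Fintype.card_subtype _).symm
    _ ≤ Fintype.card ((s ↪ s) × (↥sᶜ → α)) :=
        Fintype.card_le_of_injective _ restrict_injective
    _ = (#s)! * Fintype.card α ^ (Fintype.card α - #s) := by
      simp [Fintype.card_embedding_eq, Nat.descFactorial_self]

theorem coe_cyclicPts {n : ℕ} (f : Fin n → Fin n) :
    (cyclicPts f : Set (Fin n)) = periodicPts f := by
  ext x
  simp [cyclicPts, IsCyclicPt, mem_periodicPts, IsPeriodicPt, IsFixedPt]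

theorem card_filter_cyclicPts_eq_le {n : ℕ} (C : Finset (Fin n)) :
    #{f : Fin n → Fin n | cyclicPts f = C} ≤ (#C)! * n ^ (n - #C) := by
  refine (card_le_card fun f hf => ?_).trans ((card_filter_mapsTo_injOn_le C).trans_eq (by simp))
  have hbij := bijOn_periodicPts f
  rw [← coe_cyclicPts, (mem_filter.1 hf).2] at hbij
  exact mem_filter.2 ⟨mem_univ _, hbij.mapsTo, hbij.injOn⟩

theorem card_filter_le_card_cyclicPts_le {n : ℕ} (k : ℕ) :
    #{f : Fin n → Fin n | k ≤ #(cyclicPts f)} ≤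
      ∑ m ∈ Icc k n, n.descFactorial m * n ^ (n - m) := by
  calc #{f : Fin n → Fin n | k ≤ #(cyclicPts f)}
      = ∑ C : Finset (Fin n) with k ≤ #C,
          #{f : Fin n → Fin n | k ≤ #(cyclicPts f) ∧ cyclicPts f = C} := by
        rw [card_eq_sum_card_fiberwise (f := cyclicPts) (t := {C : Finset (Fin n) | k ≤ #C})]
        · simp [filter_filter]
        · intro f hf
          simpa using hf
    _ ≤ ∑ C : Finset (Fin n) with k ≤ #C, (#C)! * n ^ (n - #C) :=
        sum_le_sum fun C _ => (card_le_card (monotone_filter_right _ fun _ _ => And.right)).trans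
          (card_filter_cyclicPts_eq_le C)
    _ = ∑ m ∈ range (n + 1), n.choose m * if k ≤ m then m ! * n ^ (n - m) else 0 := by
        rw [sum_filter, ← powerset_univ,
          sum_powerset_apply_card fun m => if k ≤ m then m ! * n ^ (n - m) else 0]
        simp
    _ = ∑ m ∈ Icc k n, n.descFactorial m * n ^ (n - m) := by
        have : Icc k n = {m ∈ range (n + 1) | k ≤ m} := by ext; simp; omega
        simp only [mul_ite, mul_zero, ← sum_filter, this,
          Nat.descFactorial_eq_factorial_mul_choose]
        exact sum_congr rfl fun m _ => by ring

theorem Nat.cast_descFactorial_le_pow_mul_exp (n m : ℕ) :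
    (n.descFactorial m : ℝ) ≤ n ^ m * exp (-(m * (m - 1)) / (2 * n)) := by
  have factor_le (i : ℕ) : ((n - i : ℕ) : ℝ) ≤ n * exp (-(i / n)) := by
    rcases Nat.eq_zero_or_pos n with rfl | hn
    · simp
    rcases le_or_gt i n with hi | hi
    · calc ((n - i : ℕ) : ℝ) = n * (1 - i / n) := by
            rw [Nat.cast_sub hi]; field_simp
        _ ≤ n * exp (-(i / n)) := by gcongr; exact one_sub_le_exp_neg _
    · rw [Nat.sub_eq_zero_of_le hi.le, Nat.cast_zero]; positivity
  have sum_range : ∑ i ∈ range m, (i : ℝ) = m * (m - 1) / 2 := by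
    induction m with
    | zero => simp
    | succ m ih => rw [sum_range_succ, ih]; push_cast; ring
  calc (n.descFactorial m : ℝ) = ∏ i ∈ range m, ((n - i : ℕ) : ℝ) := by
        rw [Nat.descFactorial_eq_prod_range, Nat.cast_prod]
    _ ≤ ∏ i ∈ range m, (n * exp (-(i / n)) : ℝ) :=
        prod_le_prod (fun _ _ => Nat.cast_nonneg _) fun i _ => factor_le i
    _ = n ^ m * exp (-(m * (m - 1)) / (2 * n)) := by
        rw [prod_mul_distrib, prod_const, card_range, ← exp_sum, sum_neg_distrib, ← sum_div,
          sum_range]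
        ring_nf

theorem mul_exp_neg_le_of_rpow_le {ε x k : ℝ} (hε : 0 < ε) (hx : 1 ≤ x)
    (hxε : 2 / ε + 5 ≤ x ^ ε) (hk : x ^ (1 / 2 + ε) ≤ k) :
    x * exp (-(k * (k - 1)) / (2 * x)) ≤ 1 / 2 * exp (-x ^ ε) := by
  have hx0 : 0 < x := by linarith
  set A := x ^ ε
  set t := x ^ (1 / 2 + ε)
  have ht_sq : t * t = x * (A * A) := by
    rw [← rpow_add hx0, ← rpow_add hx0, ← rpow_one_add' hx0.le (by positivity)]
    ring_nf
  have ht_le : t ≤ x * A := by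
    calc t ≤ x ^ (1 + ε) := rpow_le_rpow_of_exponent_le hx (by linarith)
      _ = x * A := by rw [rpow_add hx0, rpow_one]
  have ht1 : 1 ≤ t := one_le_rpow hx (by positivity)
  have hexponent : (A * A - A) / 2 ≤ k * (k - 1) / (2 * x) := by
    rw [le_div_iff₀ (by positivity)]
    nlinarith
  have hlog : log x ≤ A / ε := log_le_rpow_div hx0.le hε
  have hlog2 : log 2 ≤ 1 := log_two_lt_d9.le.trans (by norm_num)
  have hlog_le : log 2 + log x + A ≤ (A * A - A) / 2 := by
    have : A * (2 / ε) = 2 * (A / ε) := by ring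
    nlinarith [mul_le_mul_of_nonneg_left hxε (show 0 ≤ A by positivity), div_pos two_pos hε]
  calc x * exp (-(k * (k - 1)) / (2 * x)) ≤ x * exp (-((A * A - A) / 2)) := by
        rw [neg_div]; gcongr
    _ = exp (log x - (A * A - A) / 2) := by rw [exp_sub, exp_log hx0, exp_neg]; ring
    _ ≤ exp (-log 2 - A) := exp_le_exp.2 (by linarith)
    _ = 1 / 2 * exp (-A) := by rw [exp_sub, exp_neg, exp_log two_pos, exp_neg]; ring

theorem card_filter_le_card_cyclicPts_div_le {n k : ℕ} (hk : 0 < k) :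
    (#{f : Fin n → Fin n | k ≤ #(cyclicPts f)} : ℝ) / n ^ n ≤
      n * exp (-(k * (k - 1)) / (2 * n)) := by
  have term_le : ∀ m ∈ Icc k n,
      (n.descFactorial m * n ^ (n - m) : ℝ) / n ^ n ≤ exp (-(k * (k - 1)) / (2 * n)) := by
    intro m hm
    obtain ⟨hkm, hmn⟩ := mem_Icc.1 hm
    have hn : (0 : ℝ) < n := by exact_mod_cast hk.trans_le (hkm.trans hmn)
    have hkm' : (k : ℝ) ≤ m := by exact_mod_cast hkm
    have hk' : (1 : ℝ) ≤ k := by exact_mod_cast hk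
    rw [div_le_iff₀ (by positivity)]
    calc (n.descFactorial m * n ^ (n - m) : ℝ)
        ≤ n ^ m * exp (-(m * (m - 1)) / (2 * n)) * n ^ (n - m) := by
          gcongr; exact Nat.cast_descFactorial_le_pow_mul_exp n m
      _ = exp (-(m * (m - 1)) / (2 * n)) * n ^ n := by
          rw [mul_right_comm, mul_comm, ← pow_add, Nat.add_sub_cancel' hmn]
      _ ≤ exp (-(k * (k - 1)) / (2 * n)) * n ^ n := by
          gcongr
  calc (#{f : Fin n → Fin n | k ≤ #(cyclicPts f)} : ℝ) / n ^ n
      ≤ (∑ m ∈ Icc k n, n.descFactorial m * n ^ (n - m) : ℕ) / n ^ n := by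
        gcongr; exact card_filter_le_card_cyclicPts_le k
    _ ≤ ∑ m ∈ Icc k n, exp (-(k * (k - 1)) / (2 * n)) := by
        push_cast; rw [sum_div]; exact sum_le_sum term_le
    _ ≤ n * exp (-(k * (k - 1)) / (2 * n)) := by
        rw [sum_const, Nat.card_Icc, nsmul_eq_mul]
        gcongr
        exact_mod_cast (by omega : n + 1 - k ≤ n)

/-- For any `ε > 0`, for all `n` large enough, the probability that a uniform random
mapping on `[n]` has at least `n^(1/2+ε)` cyclic points is at most `(1/2)·exp(-n^ε)`. -/
theorem uniform_mapping_cyclic_points_bound (ε : ℝ) (hε : 0 < ε) :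
    ∃ N : ℕ, ∀ n ≥ N,
      (((Finset.univ : Finset (Fin n → Fin n)).filter
          (fun f => ((cyclicPts f).card : ℝ) ≥ (n : ℝ) ^ ((1 : ℝ)/2 + ε))).card : ℝ)
        / (Fintype.card (Fin n → Fin n) : ℝ)
        ≤ (1/2) * Real.exp (-(n : ℝ) ^ ε) := by
  obtain ⟨N, hN⟩ := eventually_atTop.1 (((tendsto_rpow_atTop hε).comp
    tendsto_natCast_atTop_atTop).eventually_ge_atTop (2 / ε + 5))
  refine ⟨max N 1, fun n hn => ?_⟩
  have hn1 : (1 : ℝ) ≤ n := by exact_mod_cast le_of_max_le_right hn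
  set k := ⌈(n : ℝ) ^ ((1 : ℝ) / 2 + ε)⌉₊
  have hk : 0 < k := Nat.ceil_pos.2 (rpow_pos_of_pos (by linarith) _)
  calc _ ≤ (#{f : Fin n → Fin n | k ≤ #(cyclicPts f)} : ℝ) / n ^ n := by
        rw [Fintype.card_fun, Fintype.card_fin, Nat.cast_pow]
        gcongr with f
        exact Nat.ceil_le.2
    _ ≤ n * exp (-(k * (k - 1)) / (2 * n)) := card_filter_le_card_cyclicPts_div_le hk
    _ ≤ _ := mul_exp_neg_le_of_rpow_le hε hn1 (hN n (le_of_max_le_left hn)) (Nat.le_ceil _)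
end

section
/- Let n and ℓ be positive integers with ℓ ≤ n and let p be any probability mass function on [n]. For a random p-mapping f on [n], the probability that f has a cycle of length ℓ — that is, that there exist pairwise distinct elements x_1, …, x_ℓ of [n] with f(x_j) = x_{j+1} for 1 ≤ j < ℓ and f(x_ℓ) = x_1 — is at most ℓ! · C(n, ℓ) · n^{−ℓ}, the same bound as in the uniform case. -/
/-!
Summing over the injective tuples `x` that could carry the cycle, a union bound reduces the
claim to the case of one prescribed cycle. Since the values `f (x j)` are independent, that
cycle occurs with probability `∏ j, p (x j)`, and the sum of these over all injective
`ℓ`-tuples is `ℓ! · e_ℓ(p)`, with `e_ℓ` the elementary symmetric polynomial. Maclaurin's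
inequality `e_ℓ(p) ≤ C(n, ℓ) (∑ p / n) ^ ℓ`, proved by induction on the number of variables
from a weighted AM-GM step, finishes the proof.
-/

open Finset Function

theorem pow_mul_le_mean_pow {x y : ℝ} (hx : 0 ≤ x) (hy : 0 ≤ y) (k : ℕ) :
    x ^ k * y ≤ ((k * x + y) / (k + 1)) ^ (k + 1) := by
  rcases hx.eq_or_lt with rfl | hx
  · cases k <;> simp; positivity
  -- Bernoulli's inequality for the relative deviation `a` of the mean from `x`
  set a := (y - x) / ((k + 1) * x) with ha
  have hmean : (k * x + y) / (k + 1) = x * (1 + a) := by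
    rw [ha]; field_simp; ring
  have hbern := one_add_mul_le_pow (a := a)
    (by rw [ha, le_div_iff₀ (by positivity)]; nlinarith) (k + 1)
  calc x ^ k * y = x ^ (k + 1) * (1 + (k + 1 : ℕ) * a) := by
        rw [ha]; push_cast; field_simp; ring
    _ ≤ x ^ (k + 1) * (1 + a) ^ (k + 1) := by gcongr
    _ = ((k * x + y) / (k + 1)) ^ (k + 1) := by rw [hmean, mul_pow]

theorem Multiset.esymm_cons_succ_s9 {R : Type*} [CommSemiring R] (a : R) (s : Multiset R) (k : ℕ) :
    (a ::ₘ s).esymm (k + 1) = s.esymm (k + 1) + a * s.esymm k := by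
  simp [Multiset.esymm, Multiset.sum_map_mul_left]

theorem Multiset.esymm_le_choose_mul_mean_pow_s9 {s : Multiset ℝ} (hs : ∀ a ∈ s, 0 ≤ a) (ℓ : ℕ) :
    s.esymm ℓ ≤ (card s).choose ℓ * (s.sum / card s) ^ ℓ := by
  induction s using Multiset.induction_on generalizing ℓ with
  | empty => cases ℓ <;> simp [Multiset.esymm, Multiset.powersetCard_zero_right]
  | cons a s ih =>
    obtain _ | k := ℓ
    · simp [Multiset.esymm]
    have ha : 0 ≤ a := hs a (Multiset.mem_cons_self a s)
    have hs' : ∀ b ∈ s, 0 ≤ b := fun b hb => hs b (Multiset.mem_cons_of_mem hb)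
    replace ih := ih hs'
    rw [Multiset.esymm_cons_succ_s9, Multiset.card_cons, Multiset.sum_cons]
    set m := card s
    set μ := s.sum / m
    have hμ : 0 ≤ μ := div_nonneg (Multiset.sum_nonneg hs') m.cast_nonneg
    rcases lt_or_ge m k with hmk | hkm
    · have h1 := ih (k + 1)
      have h0 := ih k
      rw [Nat.choose_eq_zero_of_lt (by omega : m < k + 1), Nat.cast_zero, zero_mul] at h1
      rw [Nat.choose_eq_zero_of_lt hmk, Nat.cast_zero, zero_mul] at h0
      have := Multiset.sum_nonneg hs'
      calc s.esymm (k + 1) + a * s.esymm k ≤ 0 + a * 0 := by gcongr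
        _ ≤ _ := by rw [mul_zero, add_zero]; positivity
    have hsum : s.sum = m * μ := by
      rcases eq_or_ne m 0 with hm | hm
      · simp [hm, Multiset.card_eq_zero.mp hm]
      · rw [mul_div_cancel₀ _ (Nat.cast_ne_zero.mpr hm)]
    have hc1 : (m.choose (k + 1) : ℝ) = m.choose k * (m - k) / (k + 1) := by
      rw [eq_div_iff (by positivity), ← Nat.cast_sub hkm]
      exact_mod_cast Nat.choose_succ_right_eq m k
    have hc2 : ((m + 1).choose (k + 1) : ℝ) = m.choose k * (m + 1) / (k + 1) := by
      rw [eq_div_iff (by positivity)]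
      exact_mod_cast (Nat.add_one_mul_choose_eq m k).symm.trans (mul_comm _ _)
    -- `k μ + b = (k + 1) (m μ + a) / (m + 1)`, so AM-GM bounds `μ ^ k * b` by the new mean
    obtain ⟨b, hb_def⟩ : ∃ b, b = ((m - k) * μ + (k + 1) * a) / (m + 1) := ⟨_, rfl⟩
    have hb : 0 ≤ b := by
      have : (k : ℝ) ≤ m := by exact_mod_cast hkm
      rw [hb_def]; positivity
    calc s.esymm (k + 1) + a * s.esymm k
        ≤ m.choose (k + 1) * μ ^ (k + 1) + a * (m.choose k * μ ^ k) := by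
          gcongr
          · exact ih (k + 1)
          · exact ih k
      _ = m.choose k * (m + 1) / (k + 1) * (μ ^ k * b) := by
          rw [hc1, hb_def]; field_simp; ring
      _ ≤ m.choose k * (m + 1) / (k + 1) * ((k * μ + b) / (k + 1)) ^ (k + 1) := by
          gcongr
          exact pow_mul_le_mean_pow hμ hb k
      _ = ((m + 1 : ℕ).choose (k + 1) : ℝ) * ((a + s.sum) / (m + 1 : ℕ)) ^ (k + 1) := by
          rw [hc2, hsum, hb_def]
          push_cast
          congr 2
          field_simp
          ring

theorem sum_filter_exists_le_sum_sum {ι α R : Type*} [Fintype ι] [AddCommMonoid R] [PartialOrder R]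
    [IsOrderedAddMonoid R] (s : Finset α) (Q : ι → Prop) (P : ι → α → Prop) [DecidablePred Q]
    [∀ x, DecidablePred (P x)] [DecidablePred fun a => ∃ x, Q x ∧ P x a] (w : α → R)
    (hw : ∀ a ∈ s, 0 ≤ w a) :
    ∑ a ∈ s with ∃ x, Q x ∧ P x a, w a ≤ ∑ x with Q x, ∑ a ∈ s with P x a, w a :=
  calc ∑ a ∈ s with ∃ x, Q x ∧ P x a, w a ≤ ∑ a ∈ s, ∑ x with Q x ∧ P x a, w a := by
        rw [sum_filter]
        gcongr with a ha
        split_ifs with h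
        · obtain ⟨x, hx⟩ := h
          exact single_le_sum (f := fun _ => w a) (fun _ _ => hw a ha) (by simpa using hx)
        · exact sum_nonneg fun _ _ => hw a ha
    _ = ∑ x with Q x, ∑ a ∈ s with P x a, w a := sum_comm' (by simp; tauto)

theorem sum_prod_filter_eq_on_eq_prod {α β R : Type*} [Fintype α] [DecidableEq α] [Fintype β]
    [DecidableEq β] [CommSemiring R] {p : β → R} (hp : ∑ b, p b = 1) (A : Finset α) (g : α → β) :
    ∑ f : α → β with ∀ a ∈ A, f a = g a, ∏ a, p (f a) = ∏ a ∈ A, p (g a) := by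
  have hfilter : univ.filter (fun f : α → β => ∀ a ∈ A, f a = g a) =
      Fintype.piFinset fun a => if a ∈ A then {g a} else univ := by
    ext f
    simp only [mem_filter, mem_univ, true_and, Fintype.mem_piFinset]
    refine forall_congr' fun a => ?_
    split_ifs <;> simp [*]
  rw [hfilter, ← prod_univ_sum, ← Fintype.prod_ite_mem A]
  refine Fintype.prod_congr _ _ fun a => ?_
  split_ifs <;> simp [hp]

theorem sum_prod_filter_semiconj_eq_prod {ι α R : Type*} [Fintype ι] [Fintype α] [DecidableEq α]
    [CommSemiring R] {p : α → R} (hp : ∑ a, p a = 1) {x : ι → α} (hx : Injective x)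
    (σ : Equiv.Perm ι) :
    ∑ f : α → α with ∀ j, f (x j) = x (σ j), ∏ a, p (f a) = ∏ j, p (x j) := by
  have hcond : ∀ f : α → α,
      (∀ j, f (x j) = x (σ j)) ↔ ∀ a ∈ univ.image x, f a = extend x (x ∘ σ) id a := by
    simp [hx.extend_apply]
  rw [filter_congr fun f _ => hcond f, sum_prod_filter_eq_on_eq_prod hp, prod_image hx.injOn]
  simp only [hx.extend_apply, comp_apply]
  exact Equiv.prod_comp σ fun j => p (x j)

theorem card_filter_injective_image_eq {α : Type*} [Fintype α] [DecidableEq α] {S : Finset α}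
    {ℓ : ℕ} (hS : #S = ℓ) : #{x : Fin ℓ → α | Injective x ∧ univ.image x = S} = ℓ.factorial := by
  have hval : Injective fun (e : Fin ℓ ↪ S) j => (e j : α) :=
    fun e e' h => Embedding.ext fun j => Subtype.ext (congrFun h j)
  have hfiber : univ.filter (fun x : Fin ℓ → α => Injective x ∧ univ.image x = S) =
      univ.image fun (e : Fin ℓ ↪ S) j => (e j : α) := by
    ext x
    simp only [mem_filter, mem_univ, true_and, mem_image]
    constructor
    · rintro ⟨hx, rfl⟩
      exact ⟨⟨fun j => ⟨x j, mem_image_of_mem x (mem_univ j)⟩,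
        fun i j h => hx (congrArg Subtype.val h)⟩, rfl⟩
    · rintro ⟨e, rfl⟩
      have hinj : Injective fun j => (e j : α) := Subtype.val_injective.comp e.injective
      refine ⟨hinj, eq_of_subset_of_card_le (fun a ha => ?_) ?_⟩
      · obtain ⟨j, -, rfl⟩ := mem_image.mp ha
        exact (e j).2
      · rw [card_image_of_injective _ hinj, card_univ, Fintype.card_fin, hS]
  rw [hfiber, card_image_of_injective _ hval, card_univ, Fintype.card_embedding_eq,
    Fintype.card_coe, hS, Fintype.card_fin, Nat.descFactorial_self]

theorem sum_prod_injective_eq_factorial_mul_esymm {α R : Type*} [Fintype α] [DecidableEq α]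
    [CommSemiring R] (p : α → R) (ℓ : ℕ) :
    ∑ x : Fin ℓ → α with Injective x, ∏ j, p (x j) = ℓ.factorial * (univ.val.map p).esymm ℓ := by
  rw [Finset.esymm_map_val, mul_sum, ← sum_fiberwise_of_maps_to (g := fun x => univ.image x)
    (t := powersetCard ℓ univ) fun x hx => mem_powersetCard.mpr ⟨subset_univ _, by
      rw [card_image_of_injective _ (mem_filter.mp hx).2, card_univ, Fintype.card_fin]⟩]
  refine sum_congr rfl fun S hS => ?_
  rw [filter_filter]
  calc ∑ x : Fin ℓ → α with Injective x ∧ univ.image x = S, ∏ j, p (x j)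
      = ∑ x : Fin ℓ → α with Injective x ∧ univ.image x = S, ∏ i ∈ S, p i := by
        refine sum_congr rfl fun x hx => ?_
        obtain ⟨hinj, hxS⟩ := (mem_filter.mp hx).2
        rw [← hxS, prod_image hinj.injOn]
    _ = ℓ.factorial * ∏ i ∈ S, p i := by
        rw [sum_const, card_filter_injective_image_eq (mem_powersetCard.mp hS).2, nsmul_eq_mul]

theorem p_mapping_cycle_length_bound_general (n ℓ : ℕ) (hℓ : 0 < ℓ)
    (p : Fin n → ℝ) (hp : ∀ i, 0 ≤ p i) (hsum : ∑ i, p i = 1) :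
    ∑ f ∈ (Finset.univ : Finset (Fin n → Fin n)).filter
        (fun f => ∃ x : Fin ℓ → Fin n, Function.Injective x ∧
          ∀ j : Fin ℓ, f (x j) = x ⟨((j : ℕ) + 1) % ℓ, Nat.mod_lt _ hℓ⟩),
      ∏ i, p (f i)
    ≤ (ℓ.factorial : ℝ) * (n.choose ℓ : ℝ) / (n : ℝ) ^ ℓ := by
  have hrot : ∀ j : Fin ℓ, (⟨((j : ℕ) + 1) % ℓ, Nat.mod_lt _ hℓ⟩ : Fin ℓ) = finRotate ℓ j :=
    fun j => Fin.ext (by simp [finRotate_apply, Fin.val_add])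
  have hmaclaurin := Multiset.esymm_le_choose_mul_mean_pow_s9 (s := univ.val.map p)
    (by simpa using fun i => hp i) ℓ
  simp only [Multiset.card_map, card_val, card_univ, Fintype.card_fin, ← Finset.sum_eq_multiset_sum,
    hsum] at hmaclaurin
  simp only [hrot]
  calc _ ≤ ∑ x : Fin ℓ → Fin n with Injective x,
          ∑ f : Fin n → Fin n with ∀ j, f (x j) = x (finRotate ℓ j), ∏ i, p (f i) :=
        sum_filter_exists_le_sum_sum _ _ _ _ fun f _ => prod_nonneg fun i _ => hp (f i)
    _ = ∑ x : Fin ℓ → Fin n with Injective x, ∏ j, p (x j) :=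
        sum_congr rfl fun x hx => by
          convert sum_prod_filter_semiconj_eq_prod hsum (mem_filter.mp hx).2 (finRotate ℓ)
    _ = ℓ.factorial * (univ.val.map p).esymm ℓ := sum_prod_injective_eq_factorial_mul_esymm p ℓ
    _ ≤ ℓ.factorial * (n.choose ℓ * (1 / n) ^ ℓ) := by gcongr
    _ = ℓ.factorial * n.choose ℓ / n ^ ℓ := by ring

/-- For `0 < ℓ ≤ n` and any probability mass function `p` on `[n]`, the probability that
a random `p`-mapping on `[n]` has a cycle of length `ℓ` (pairwise distinct points
`x_1, …, x_ℓ` with `f(x_j) = x_{j+1}` cyclically) is at most `ℓ! · C(n,ℓ) · n^{-ℓ}`,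
the same bound as in the uniform case. -/
theorem p_mapping_cycle_length_bound (n ℓ : ℕ) (hℓ : 0 < ℓ) (hn : ℓ ≤ n)
    (p : Fin n → ℝ) (hp : ∀ i, 0 ≤ p i) (hsum : ∑ i, p i = 1) :
    ∑ f ∈ (Finset.univ : Finset (Fin n → Fin n)).filter
        (fun f => ∃ x : Fin ℓ → Fin n, Function.Injective x ∧
          ∀ j : Fin ℓ, f (x j) = x ⟨((j : ℕ) + 1) % ℓ, Nat.mod_lt _ hℓ⟩),
      ∏ i, p (f i)
    ≤ (ℓ.factorial : ℝ) * (n.choose ℓ : ℝ) / (n : ℝ) ^ ℓ :=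
  p_mapping_cycle_length_bound_general n ℓ hℓ p hp hsum
end
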